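/- arXiv:2312.06937 — 4 statements merged into one kernel-verified Lean document; each statement's English description precedes it below -/
import Mathlib

section
/- Let z_0,…,z_N be points in ℝ^d with softmax weights α_i = exp(−β‖z_i − z_N‖²) / Σ_{j=0}^N exp(−β‖z_j − z_N‖²) for β > 0. Then the weighted average ẑ = Σ_{i=0}^N α_i z_i satisfies ‖ẑ − z_N‖ ≤ (N+1)/√(2eβ). -/
/-!
Subtracting `z N` turns the softmax average into `∑ αᵢ (zᵢ - z N)`. Since the `j = N` term of
the normalising sum equals `1`, each weight satisfies `αᵢ ≤ exp (-β ‖zᵢ - z N‖²)`, so every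
summand has norm at most `sup_{x ≥ 0} x e^{-βx²} = 1/√(2eβ)`.
-/

open Finset

namespace Real

theorem mul_exp_neg_mul_sq_le {β : ℝ} (hβ : 0 < β) (x : ℝ) :
    x * exp (-β * x ^ 2) ≤ 1 / √(2 * exp 1 * β) := by
  have hsq : (x * exp (-β * x ^ 2)) ^ 2 ≤ 1 / (2 * exp 1 * β) := by
    have hexp : exp 1 * (2 * β * x ^ 2) ≤ exp (2 * β * x ^ 2) := exp_one_mul_le_exp
    have hpow : (x * exp (-β * x ^ 2)) ^ 2 = x ^ 2 / exp (2 * β * x ^ 2) := by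
      rw [mul_pow, ← exp_nat_mul, div_eq_mul_inv, ← exp_neg]
      ring_nf
    rw [hpow, div_le_div_iff₀ (exp_pos _) (by positivity)]
    nlinarith
  calc x * exp (-β * x ^ 2) ≤ |x * exp (-β * x ^ 2)| := le_abs_self _
    _ ≤ √(1 / (2 * exp 1 * β)) := abs_le_sqrt hsq
    _ = 1 / √(2 * exp 1 * β) := by rw [sqrt_div' _ (by positivity), sqrt_one]

end Real

variable {ι E : Type*} [NormedAddCommGroup E] [NormedSpace ℝ E]

theorem sum_div_sum_smul_sub_eq {s : Finset ι} {w : ι → ℝ} (hw : ∑ i ∈ s, w i ≠ 0)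
    (z : ι → E) (c : E) :
    (∑ i ∈ s, (w i / ∑ j ∈ s, w j) • z i) - c = ∑ i ∈ s, (w i / ∑ j ∈ s, w j) • (z i - c) := by
  simp only [smul_sub, sum_sub_distrib, ← sum_smul, ← sum_div, div_self hw, one_smul]

theorem norm_sum_div_sum_smul_sub_le {s : Finset ι} {w : ι → ℝ} (hw₀ : ∀ i ∈ s, 0 ≤ w i)
    (hw₁ : 1 ≤ ∑ i ∈ s, w i) (z : ι → E) (c : E) :
    ‖(∑ i ∈ s, (w i / ∑ j ∈ s, w j) • z i) - c‖ ≤ ∑ i ∈ s, w i * ‖z i - c‖ := by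
  rw [sum_div_sum_smul_sub_eq (by linarith) z c]
  refine (norm_sum_le _ _).trans (sum_le_sum fun i hi => ?_)
  rw [norm_smul, Real.norm_of_nonneg (div_nonneg (hw₀ i hi) (by linarith))]
  gcongr
  exact div_le_self (hw₀ i hi) hw₁

open Finset in
/-- Softmax-weighted averages with Gaussian weights centered at the query `z N`:
the weighted average is within `(N+1)/√(2eβ)` of `z N`. -/
theorem stmt1 {d : ℕ} (N : ℕ) (β : ℝ) (hβ : 0 < β)
    (z : ℕ → EuclideanSpace ℝ (Fin d)) :
    ‖(∑ i ∈ range (N + 1),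
        (Real.exp (-β * ‖z i - z N‖ ^ 2) /
          ∑ j ∈ range (N + 1), Real.exp (-β * ‖z j - z N‖ ^ 2)) • z i) - z N‖ ≤
      (N + 1) / Real.sqrt (2 * Real.exp 1 * β) := by
  set w : ℕ → ℝ := fun i => Real.exp (-β * ‖z i - z N‖ ^ 2)
  have hw₀ : ∀ i ∈ range (N + 1), 0 ≤ w i := fun i _ => (Real.exp_pos _).le
  have hw₁ : 1 ≤ ∑ i ∈ range (N + 1), w i := by
    have hwN : w N = 1 := by simp [w]
    exact hwN ▸ single_le_sum hw₀ (self_mem_range_succ N)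
  calc _ ≤ ∑ i ∈ range (N + 1), w i * ‖z i - z N‖ := norm_sum_div_sum_smul_sub_le hw₀ hw₁ z (z N)
    _ ≤ ∑ _i ∈ range (N + 1), 1 / Real.sqrt (2 * Real.exp 1 * β) :=
        sum_le_sum fun i _ => (mul_comm _ _).trans_le (Real.mul_exp_neg_mul_sq_le hβ _)
    _ = (N + 1) / Real.sqrt (2 * Real.exp 1 * β) := by
        rw [sum_const, card_range, nsmul_eq_mul, mul_one_div, Nat.cast_add_one]
end

section
/- Let Σ ∈ ℝ^{d×d} be symmetric and W ∈ ℝ^{k×d}. Then there exist an embedding φ: ℝ^d → ℝ^{ℓ} with ℓ = 1 + d + d², a matrix A ∈ ℝ^{ℓ×ℓ}, and a matrix M ∈ ℝ^{k×ℓ} such that for all z_0,…,z_N, z ∈ ℝ^d, the Nadaraya–Watson estimator F(z_0,…,z_N; z) = [Σ_i exp(−(z−z_i)ᵀΣ(z−z_i)) W z_i] / [Σ_j exp(−(z−z_j)ᵀΣ(z−z_j))] equals the softmax self-attention output [Σ_i exp(φ(z)ᵀ A φ(z_i)) M φ(z_i)] / [Σ_j exp(φ(z)ᵀ A φ(z_j))].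 -/
/-!
The Gaussian exponent `-(x - y)ᵀ Σ (x - y) = -xᵀΣx + xᵀ(Σ + Σᵀ)y - yᵀΣy` is a bilinear form in
the quadratic features `(1, z, z ⊗ z)` of `x` and `y`, so the kernel weights are exactly
attention scores `φ(x)ᵀ A φ(y)`; the value matrix reads `W z` off the linear features.
-/

open Matrix Finset

section QuadraticFeatures

variable {n R : Type*} [Fintype n]

def quadFeatures [One R] [Mul R] (z : n → R) : Unit ⊕ n ⊕ n × n → R :=
  Sum.elim (fun _ => 1) (Sum.elim z (fun p => z p.1 * z p.2))

def gaussianScoreMatrix [Ring R] (S : Matrix n n R) :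
    Matrix (Unit ⊕ n ⊕ n × n) (Unit ⊕ n ⊕ n × n) R
  | .inl _, .inr (.inr p) => -S p.1 p.2
  | .inr (.inr p), .inl _ => -S p.1 p.2
  | .inr (.inl a), .inr (.inl b) => S a b + S b a
  | _, _ => 0

def linearReadout {m : Type*} [Zero R] (W : Matrix m n R) : Matrix m (Unit ⊕ n ⊕ n × n) R
  | i, .inr (.inl b) => W i b
  | _, _ => 0

lemma quadForm_sub [CommRing R] (S : Matrix n n R) (x y : n → R) :
    (x - y) ⬝ᵥ S *ᵥ (x - y) = x ⬝ᵥ S *ᵥ x - x ⬝ᵥ (S + Sᵀ) *ᵥ y + y ⬝ᵥ S *ᵥ y := by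
  have hcross : y ⬝ᵥ S *ᵥ x = x ⬝ᵥ Sᵀ *ᵥ y := by
    rw [dotProduct_mulVec, ← mulVec_transpose, dotProduct_comm]
  rw [add_mulVec, dotProduct_add, ← hcross, sub_dotProduct, mulVec_sub, dotProduct_sub,
    dotProduct_sub]
  ring

lemma quadForm_eq_sum_prod [CommSemiring R] (S : Matrix n n R) (x : n → R) :
    x ⬝ᵥ S *ᵥ x = ∑ p : n × n, S p.1 p.2 * (x p.1 * x p.2) := by
  simp only [dotProduct, mulVec, Fintype.sum_prod_type, mul_sum]
  exact sum_congr rfl fun a _ => sum_congr rfl fun b _ => by ring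

lemma quadFeatures_dotProduct_gaussianScoreMatrix_mulVec [CommRing R] (S : Matrix n n R)
    (x y : n → R) :
    quadFeatures x ⬝ᵥ gaussianScoreMatrix S *ᵥ quadFeatures y = -((x - y) ⬝ᵥ S *ᵥ (x - y)) := by
  rw [quadForm_sub, quadForm_eq_sum_prod S x, quadForm_eq_sum_prod S y]
  simp only [dotProduct, mulVec, quadFeatures, gaussianScoreMatrix, Fintype.sum_sum_type,
    Fintype.sum_unique, Sum.elim_inl, Sum.elim_inr, zero_mul, sum_const_zero, add_zero, zero_add,
    one_mul, mul_one, neg_mul, mul_neg, sum_neg_distrib, Matrix.add_apply, transpose_apply,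
    mul_comm (x _ * x _)]
  ring

lemma linearReadout_mulVec_quadFeatures {m : Type*} [Semiring R] (W : Matrix m n R)
    (y : n → R) : linearReadout W *ᵥ quadFeatures y = W *ᵥ y := by
  funext i
  simp [linearReadout, quadFeatures, mulVec, dotProduct, Fintype.sum_sum_type]

end QuadraticFeatures

theorem stmt4_general {d k : ℕ} (S : Matrix (Fin d) (Fin d) ℝ)
    (W : Matrix (Fin k) (Fin d) ℝ) :
    ∃ (φ : (Fin d → ℝ) → (Unit ⊕ Fin d ⊕ Fin d × Fin d) → ℝ)
      (A : Matrix (Unit ⊕ Fin d ⊕ Fin d × Fin d) (Unit ⊕ Fin d ⊕ Fin d × Fin d) ℝ)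
      (M : Matrix (Fin k) (Unit ⊕ Fin d ⊕ Fin d × Fin d) ℝ),
      ∀ (N : ℕ) (z : ℕ → Fin d → ℝ) (zq : Fin d → ℝ),
        (∑ j ∈ range (N + 1),
            Real.exp (-((zq - z j) ⬝ᵥ S *ᵥ (zq - z j))))⁻¹ •
          (∑ i ∈ range (N + 1),
            Real.exp (-((zq - z i) ⬝ᵥ S *ᵥ (zq - z i))) • (W *ᵥ z i)) =
        (∑ j ∈ range (N + 1),
            Real.exp (φ zq ⬝ᵥ A *ᵥ φ (z j)))⁻¹ •
          (∑ i ∈ range (N + 1),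
            Real.exp (φ zq ⬝ᵥ A *ᵥ φ (z i)) • (M *ᵥ φ (z i))) := by
  refine ⟨quadFeatures, gaussianScoreMatrix S, linearReadout W, fun N z zq => ?_⟩
  simp only [quadFeatures_dotProduct_gaussianScoreMatrix_mulVec,
    linearReadout_mulVec_quadFeatures]

open Matrix Finset in
/-- The Nadaraya–Watson estimator with Gaussian kernel `Σ` and value map `W` can be
represented exactly by a softmax self-attention block: there are an embedding
`φ : ℝ^d → ℝ^ℓ` with `ℓ = 1 + d + d²` (indexed by `Unit ⊕ Fin d ⊕ Fin d × Fin d`),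
a query/key matrix `A` and a value matrix `M` realizing `F` for every token sequence. -/
theorem stmt4 {d k : ℕ} (S : Matrix (Fin d) (Fin d) ℝ) (hS : S.IsSymm)
    (W : Matrix (Fin k) (Fin d) ℝ) :
    ∃ (φ : (Fin d → ℝ) → (Unit ⊕ Fin d ⊕ Fin d × Fin d) → ℝ)
      (A : Matrix (Unit ⊕ Fin d ⊕ Fin d × Fin d) (Unit ⊕ Fin d ⊕ Fin d × Fin d) ℝ)
      (M : Matrix (Fin k) (Unit ⊕ Fin d ⊕ Fin d × Fin d) ℝ),
      ∀ (N : ℕ) (z : ℕ → Fin d → ℝ) (zq : Fin d → ℝ),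
        (∑ j ∈ range (N + 1),
            Real.exp (-((zq - z j) ⬝ᵥ S *ᵥ (zq - z j))))⁻¹ •
          (∑ i ∈ range (N + 1),
            Real.exp (-((zq - z i) ⬝ᵥ S *ᵥ (zq - z i))) • (W *ᵥ z i)) =
        (∑ j ∈ range (N + 1),
            Real.exp (φ zq ⬝ᵥ A *ᵥ φ (z j)))⁻¹ •
          (∑ i ∈ range (N + 1),
            Real.exp (φ zq ⬝ᵥ A *ᵥ φ (z i)) • (M *ᵥ φ (z i))) :=
  stmt4_general S W
end

section
/- Consider two sequences x̂_t and x̂*_t in ℝ^n satisfying x̂*_t = F x̂*_{t−1} + L y_{t−1} and x̂_t = x̃_t + e_t where x̃_t = F x̂_{t−1} + L y_{t−1}, with x̂_0 = x̂*_0 and ‖e_t‖ ≤ ε₁ for all t ≥ 1. If F = MθM^{−1} with ‖θ‖ < 1 and κ = ‖M‖‖M^{−1}‖, then for all t ≥ 0, ‖x̂_t − x̂*_t‖ ≤ κ ε₁ / (1 − ‖θ‖). -/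
/-!
Pass to the coordinates `M⁻¹ x`, in which the error `d_t = x̂_t − x̂*_t` obeys
`M⁻¹ d_{t+1} = θ (M⁻¹ d_t) + M⁻¹ e_{t+1}`. There `θ` contracts, so `‖M⁻¹ d_t‖` stays below
the fixed point `‖M⁻¹‖ ε₁ / (1 − ‖θ‖)` of `a ↦ ‖θ‖ a + ‖M⁻¹‖ ε₁`, and going back through `M`
costs the factor `‖M‖`.
-/

theorem le_div_one_sub_of_le_mul_add {a : ℕ → ℝ} {q b : ℝ} (hq0 : 0 ≤ q) (hq1 : q < 1)
    (h0 : a 0 ≤ b / (1 - q)) (hstep : ∀ t, a (t + 1) ≤ q * a t + b) (t : ℕ) :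
    a t ≤ b / (1 - q) := by
  induction t with
  | zero => exact h0
  | succ t ih =>
    have hfix : q * (b / (1 - q)) + b = b / (1 - q) := by
      field_simp [(sub_pos.mpr hq1).ne']
      ring
    calc a (t + 1) ≤ q * a t + b := hstep t
      _ ≤ q * (b / (1 - q)) + b := by gcongr
      _ = b / (1 - q) := hfix

section PerturbedConjugateContraction

variable {𝕜 E : Type*} [NontriviallyNormedField 𝕜] [SeminormedAddCommGroup E]
  [NormedSpace 𝕜 E]

theorem norm_le_of_perturbed_conjugate_contraction (M : E ≃L[𝕜] E) (θ : E →L[𝕜] E)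
    (hθ : ‖θ‖ < 1) {ε : ℝ} {d w : ℕ → E} (hd0 : d 0 = 0)
    (hd : ∀ t, d (t + 1) = M (θ (M.symm (d t))) + w t) (hw : ∀ t, ‖w t‖ ≤ ε)
    (t : ℕ) :
    ‖d t‖ ≤ ‖(M : E →L[𝕜] E)‖ * ‖(M.symm : E →L[𝕜] E)‖ * ε / (1 - ‖θ‖) := by
  set Mi : E →L[𝕜] E := ↑M.symm
  have hε : 0 ≤ ε := (norm_nonneg _).trans (hw 0)
  have hcoord : ∀ t, ‖Mi (d t)‖ ≤ ‖Mi‖ * ε / (1 - ‖θ‖) := by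
    refine le_div_one_sub_of_le_mul_add (norm_nonneg θ) hθ ?_ fun t ↦ ?_
    · simp only [hd0, map_zero, norm_zero]
      exact div_nonneg (by positivity) (sub_pos.mpr hθ).le
    · calc ‖Mi (d (t + 1))‖ = ‖θ (Mi (d t)) + Mi (w t)‖ := by
            simp only [hd, map_add, Mi, ContinuousLinearEquiv.coe_coe,
              ContinuousLinearEquiv.symm_apply_apply]
        _ ≤ ‖θ‖ * ‖Mi (d t)‖ + ‖Mi‖ * ε := by
            refine (norm_add_le _ _).trans (add_le_add (θ.le_opNorm _) ?_)
            exact (Mi.le_opNorm _).trans (by gcongr; exact hw t)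
  calc ‖d t‖ = ‖(M : E →L[𝕜] E) (Mi (d t))‖ := by
        simp only [Mi, ContinuousLinearEquiv.coe_coe, ContinuousLinearEquiv.apply_symm_apply]
    _ ≤ ‖(M : E →L[𝕜] E)‖ * (‖Mi‖ * ε / (1 - ‖θ‖)) :=
        (ContinuousLinearMap.le_opNorm _ _).trans (by gcongr; exact hcoord t)
    _ = ‖(M : E →L[𝕜] E)‖ * ‖Mi‖ * ε / (1 - ‖θ‖) := by ring

end PerturbedConjugateContraction

theorem stmt7_general {n p : ℕ} (F : EuclideanSpace ℝ (Fin n) →L[ℝ] EuclideanSpace ℝ (Fin n))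
    (L : EuclideanSpace ℝ (Fin p) →L[ℝ] EuclideanSpace ℝ (Fin n))
    (M : EuclideanSpace ℝ (Fin n) ≃L[ℝ] EuclideanSpace ℝ (Fin n))
    (θ : EuclideanSpace ℝ (Fin n) →L[ℝ] EuclideanSpace ℝ (Fin n))
    (hF : F = (M : EuclideanSpace ℝ (Fin n) →L[ℝ] EuclideanSpace ℝ (Fin n)).comp
        (θ.comp (M.symm : EuclideanSpace ℝ (Fin n) →L[ℝ] EuclideanSpace ℝ (Fin n))))
    (hθ : ‖θ‖ < 1)
    (κ : ℝ)
    (hκ : κ = ‖(M : EuclideanSpace ℝ (Fin n) →L[ℝ] EuclideanSpace ℝ (Fin n))‖ *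
        ‖(M.symm : EuclideanSpace ℝ (Fin n) →L[ℝ] EuclideanSpace ℝ (Fin n))‖)
    (ε₁ : ℝ)
    (y : ℕ → EuclideanSpace ℝ (Fin p))
    (xhat xstar xtilde : ℕ → EuclideanSpace ℝ (Fin n))
    (e : ℕ → EuclideanSpace ℝ (Fin n))
    (h0 : xhat 0 = xstar 0)
    (hstar : ∀ t, 1 ≤ t → xstar t = F (xstar (t - 1)) + L (y (t - 1)))
    (htilde : ∀ t, 1 ≤ t → xtilde t = F (xhat (t - 1)) + L (y (t - 1)))
    (hhat : ∀ t, 1 ≤ t → xhat t = xtilde t + e t)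
    (he : ∀ t, 1 ≤ t → ‖e t‖ ≤ ε₁) :
    ∀ t : ℕ, ‖xhat t - xstar t‖ ≤ κ * ε₁ / (1 - ‖θ‖) := by
  have herr : ∀ t, xhat (t + 1) - xstar (t + 1) =
      M (θ (M.symm (xhat t - xstar t))) + e (t + 1) := by
    intro t
    rw [hhat _ (by omega), htilde _ (by omega), hstar _ (by omega), Nat.add_sub_cancel, hF]
    simp only [ContinuousLinearMap.comp_apply, ContinuousLinearEquiv.coe_coe, map_sub]
    abel
  intro t
  rw [hκ]
  exact norm_le_of_perturbed_conjugate_contraction (d := fun t ↦ xhat t - xstar t)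
    (w := fun t ↦ e (t + 1)) M θ hθ (sub_eq_zero.mpr h0) herr (fun t ↦ he (t + 1) (by omega)) t

/-- Error propagation for a stable linear filter recursion: if `x̂*` follows the exact
recursion `x̂*_t = F x̂*_{t−1} + L y_{t−1}`, and `x̂` follows the same recursion up to an
additive error `e_t` of norm at most `ε₁`, with matching initialization and
`F = M θ M⁻¹`, `‖θ‖ < 1`, then `‖x̂_t − x̂*_t‖ ≤ κ ε₁/(1 − ‖θ‖)` for all `t`. -/
theorem stmt7 {n p : ℕ} (F : EuclideanSpace ℝ (Fin n) →L[ℝ] EuclideanSpace ℝ (Fin n))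
    (L : EuclideanSpace ℝ (Fin p) →L[ℝ] EuclideanSpace ℝ (Fin n))
    (M : EuclideanSpace ℝ (Fin n) ≃L[ℝ] EuclideanSpace ℝ (Fin n))
    (θ : EuclideanSpace ℝ (Fin n) →L[ℝ] EuclideanSpace ℝ (Fin n))
    (hF : F = (M : EuclideanSpace ℝ (Fin n) →L[ℝ] EuclideanSpace ℝ (Fin n)).comp
        (θ.comp (M.symm : EuclideanSpace ℝ (Fin n) →L[ℝ] EuclideanSpace ℝ (Fin n))))
    (hθ : ‖θ‖ < 1)
    (κ : ℝ)
    (hκ : κ = ‖(M : EuclideanSpace ℝ (Fin n) →L[ℝ] EuclideanSpace ℝ (Fin n))‖ *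
        ‖(M.symm : EuclideanSpace ℝ (Fin n) →L[ℝ] EuclideanSpace ℝ (Fin n))‖)
    (ε₁ : ℝ) (hε₁ : 0 < ε₁)
    (y : ℕ → EuclideanSpace ℝ (Fin p))
    (xhat xstar xtilde : ℕ → EuclideanSpace ℝ (Fin n))
    (e : ℕ → EuclideanSpace ℝ (Fin n))
    (h0 : xhat 0 = xstar 0)
    (hstar : ∀ t, 1 ≤ t → xstar t = F (xstar (t - 1)) + L (y (t - 1)))
    (htilde : ∀ t, 1 ≤ t → xtilde t = F (xhat (t - 1)) + L (y (t - 1)))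
    (hhat : ∀ t, 1 ≤ t → xhat t = xtilde t + e t)
    (he : ∀ t, 1 ≤ t → ‖e t‖ ≤ ε₁) :
    ∀ t : ℕ, ‖xhat t - xstar t‖ ≤ κ * ε₁ / (1 - ‖θ‖) :=
  stmt7_general F L M θ hF hθ κ hκ ε₁ y xhat xstar xtilde e h0 hstar htilde hhat he
end

section
/- (Transformer controller approximates LQG) Consider the system x_{t+1} = Ax_t + Bu_t + w_t, y_t = Cx_t + v_t, controlled by u_t = Kx̂_t, where x̂_t = Σ_{i=t−H+1}^t α_{i,t} x̃_i with x̃_i = (A+BK−LC) x̂_{i−1} + L y_{i−1} and Gaussian softmax weights α_{i,t} with temperature β, versus the same system driven by the LQG controller x̂*_t = (A+BK−LC)x̂*_{t−1} + Ly_{t−1}, u*_t = Kx̂*_t, with matching initializations x_0 = x*_0 and x̂_0 = x̃_0 = x̂*_0 and the same disturbance sequences. Suppose A−LC and A+BK are stable, so 𝔸 (the 4n×4n closed-loop matrix) satisfies 𝔸 = 𝕄Θ𝕄^{−1} with ‖Θ‖ < 1, κ = ‖𝕄‖‖𝕄^{−1}‖. Then for every ε > 0, choosing β ≥ C H² κ²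 / (2e(1−‖Θ‖)² ε²) with C = 2‖BK‖² + 2‖A+BK−LC‖² guarantees ‖x_t − x*_t‖ ≤ ε for all t ≥ 0. -/
/-!
Write `e = x - x*`, `ẽ = x̃ - x̂*` and `η = x̂ - x̃`. Subtracting the two closed loops gives
`(e, ẽ, 0, 0)ₜ₊₁ = 𝔸 (e, ẽ, 0, 0)ₜ + (BK ηₜ, (A + BK - LC) ηₜ, 0, 0)` with zero initial error.
In the coordinates `𝕄⁻¹` this recursion is driven by the contraction `Θ`, so the error stays
below `κ sup ‖dₜ‖ / (1 - ‖Θ‖)`. The attention output `x̂ₜ` is a convex combination of the `x̃ᵢ`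
whose weight on `x̃ᵢ` is at most `exp (-β ‖x̃ᵢ - x̃ₜ‖²)`, so
`‖ηₜ‖ ≤ H · maxᵣ r e^{-βr²} = H / √(2eβ)`, and the choice of `β` makes the resulting bound at
most `ε`.
-/

noncomputable section

/-- The `ℓ²` product of two Euclidean spaces. -/
abbrev EucPair (n : ℕ) :=
  WithLp 2 (EuclideanSpace ℝ (Fin n) × EuclideanSpace ℝ (Fin n))

/-- The `ℓ²` product of four Euclidean spaces (a `4n`-dimensional Euclidean space). -/
abbrev EucQuad (n : ℕ) := WithLp 2 (EucPair n × EucPair n)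

/-- Stack four vectors of `ℝⁿ` into `ℝ^{4n}` (with the Euclidean norm). -/
def stack4 {n : ℕ} (a b c d : EuclideanSpace ℝ (Fin n)) : EucQuad n :=
  (WithLp.equiv 2 _).symm ((WithLp.equiv 2 _).symm (a, b), (WithLp.equiv 2 _).symm (c, d))

open Real Finset

lemma exp_neg_mul_sq_mul_le {β : ℝ} (hβ : 0 < β) (r : ℝ) :
    exp (-β * r ^ 2) * r ≤ (√(2 * exp 1 * β))⁻¹ := by
  have hsq : (√(2 * exp 1 * β) * r) ^ 2 ≤ exp (β * r ^ 2) ^ 2 := by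
    have h : exp (β * r ^ 2) ^ 2 = exp (2 * β * r ^ 2 - 1) * exp 1 := by
      rw [← exp_add, sq, ← exp_add]; ring_nf
    rw [mul_pow, sq_sqrt (by positivity), h]
    nlinarith [add_one_le_exp (2 * β * r ^ 2 - 1), exp_pos 1]
  rw [neg_mul, exp_neg, inv_mul_eq_div, div_le_iff₀ (exp_pos _),
    le_inv_mul_iff₀ (sqrt_pos.2 (by positivity))]
  exact le_of_sq_le_sq hsq (exp_pos _).le

lemma norm_softmax_sub_le {ι E : Type*} [NormedAddCommGroup E] [NormedSpace ℝ E] {β : ℝ}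
    (hβ : 0 < β) (s : Finset ι) (z : ι → E) {t : ι} (ht : t ∈ s) :
    ‖(∑ i ∈ s, (exp (-β * ‖z i - z t‖ ^ 2) / ∑ j ∈ s, exp (-β * ‖z j - z t‖ ^ 2)) • z i) - z t‖
      ≤ #s * (√(2 * exp 1 * β))⁻¹ := by
  set a : ι → ℝ := fun i => exp (-β * ‖z i - z t‖ ^ 2)
  have ha : ∀ i, 0 ≤ a i := fun i => (exp_pos _).le
  -- the normaliser contains the term `i = t`, which is `1`
  have hD : 1 ≤ ∑ j ∈ s, a j :=
    calc 1 = a t := by simp [a]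
      _ ≤ _ := single_le_sum (fun i _ => ha i) ht
  have hcentre : (∑ i ∈ s, (a i / ∑ j ∈ s, a j) • z i) - z t
      = ∑ i ∈ s, (a i / ∑ j ∈ s, a j) • (z i - z t) := by
    simp_rw [smul_sub]
    rw [sum_sub_distrib, ← sum_smul, ← sum_div, div_self (by positivity), one_smul]
  rw [hcentre]
  calc _ ≤ ∑ i ∈ s, ‖(a i / ∑ j ∈ s, a j) • (z i - z t)‖ := norm_sum_le _ _
    _ ≤ ∑ i ∈ s, (√(2 * exp 1 * β))⁻¹ := sum_le_sum fun i _ => by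
        rw [norm_smul, norm_of_nonneg (div_nonneg (ha i) (by positivity))]
        exact (mul_le_mul_of_nonneg_right (div_le_self (ha i) hD) (norm_nonneg _)).trans
          (exp_neg_mul_sq_mul_le hβ _)
    _ = _ := by rw [sum_const, nsmul_eq_mul]

lemma norm_softmax_window_sub_le {E : Type*} [NormedAddCommGroup E] [NormedSpace ℝ E] {β : ℝ}
    (hβ : 0 < β) {H : ℕ} (hH : 1 ≤ H) (z : ℤ → E) (t : ℤ) :
    ‖(∑ i ∈ Icc (t - H + 1) t, (exp (-β * ‖z i - z t‖ ^ 2) /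
        ∑ j ∈ Icc (t - H + 1) t, exp (-β * ‖z j - z t‖ ^ 2)) • z i) - z t‖
      ≤ H * (√(2 * exp 1 * β))⁻¹ := by
  simpa [Int.card_Icc] using norm_softmax_sub_le hβ (Icc (t - H + 1) t) z (by simp; omega)

lemma norm_le_of_contraction_recursion {E : Type*} [NormedAddCommGroup E] [NormedSpace ℝ E]
    {Θ : E →L[ℝ] E} (hΘ : ‖Θ‖ < 1) {ζ e : ℕ → E} {c : ℝ} (h0 : ζ 0 = 0)
    (hrec : ∀ k, ζ (k + 1) = Θ (ζ k) + e k) (he : ∀ k, ‖e k‖ ≤ c) (k : ℕ) :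
    ‖ζ k‖ ≤ c / (1 - ‖Θ‖) := by
  have h1 : 0 < 1 - ‖Θ‖ := sub_pos.2 hΘ
  induction k with
  | zero => rw [h0, norm_zero]; exact div_nonneg ((norm_nonneg _).trans (he 0)) h1.le
  | succ k ih =>
    calc ‖ζ (k + 1)‖ ≤ ‖Θ‖ * ‖ζ k‖ + c := by
          rw [hrec]; exact (norm_add_le _ _).trans (add_le_add (Θ.le_opNorm _) (he k))
      _ ≤ ‖Θ‖ * (c / (1 - ‖Θ‖)) + c := by gcongr
      _ = c / (1 - ‖Θ‖) := by field_simp; ring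

lemma norm_le_of_similar_recursion {E : Type*} [NormedAddCommGroup E] [NormedSpace ℝ E]
    {T Θ : E →L[ℝ] E} (𝕄 : E ≃L[ℝ] E)
    (hT : T = (𝕄 : E →L[ℝ] E).comp (Θ.comp (𝕄.symm : E →L[ℝ] E)))
    (hΘ : ‖Θ‖ < 1) {Δ d : ℕ → E} {c : ℝ} (h0 : Δ 0 = 0)
    (hrec : ∀ k, Δ (k + 1) = T (Δ k) + d k) (hd : ∀ k, ‖d k‖ ≤ c) (k : ℕ) :
    ‖Δ k‖ ≤ ‖(𝕄 : E →L[ℝ] E)‖ * ‖(𝕄.symm : E →L[ℝ] E)‖ * c / (1 - ‖Θ‖) := by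
  have hζ := norm_le_of_contraction_recursion hΘ (ζ := fun k => 𝕄.symm (Δ k))
    (e := fun k => 𝕄.symm (d k)) (c := ‖(𝕄.symm : E →L[ℝ] E)‖ * c) (by simp [h0])
    (fun k => by simp [hrec, hT])
    (fun k => ((𝕄.symm : E →L[ℝ] E).le_opNorm _).trans
      (mul_le_mul_of_nonneg_left (hd k) (norm_nonneg _))) k
  calc ‖Δ k‖ = ‖𝕄 (𝕄.symm (Δ k))‖ := by simp
    _ ≤ ‖(𝕄 : E →L[ℝ] E)‖ * ‖𝕄.symm (Δ k)‖ := (𝕄 : E →L[ℝ] E).le_opNorm _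
    _ ≤ _ := by rw [mul_assoc, mul_div_assoc]; gcongr

lemma stack4_add {n : ℕ} (a b c d a' b' c' d' : EuclideanSpace ℝ (Fin n)) :
    stack4 a b c d + stack4 a' b' c' d' = stack4 (a + a') (b + b') (c + c') (d + d') := rfl

lemma norm_stack4_sq {n : ℕ} (a b c d : EuclideanSpace ℝ (Fin n)) :
    ‖stack4 a b c d‖ ^ 2 = ‖a‖ ^ 2 + ‖b‖ ^ 2 + ‖c‖ ^ 2 + ‖d‖ ^ 2 := by
  simp [stack4, WithLp.prod_norm_sq_eq_of_L2]
  ring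

lemma norm_le_norm_stack4 {n : ℕ} (a b c d : EuclideanSpace ℝ (Fin n)) :
    ‖a‖ ≤ ‖stack4 a b c d‖ :=
  le_of_sq_le_sq (by rw [norm_stack4_sq]; linarith [sq_nonneg ‖b‖, sq_nonneg ‖c‖, sq_nonneg ‖d‖])
    (norm_nonneg _)

lemma norm_stack4_apply_le {n k : ℕ}
    (G F : EuclideanSpace ℝ (Fin k) →L[ℝ] EuclideanSpace ℝ (Fin n)) (u : EuclideanSpace ℝ (Fin k)) :
    ‖stack4 (G u) (F u) 0 0‖ ≤ (‖G‖ + ‖F‖) * ‖u‖ := by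
  refine le_of_sq_le_sq ?_ (by positivity)
  rw [norm_stack4_sq, norm_zero, add_mul]
  nlinarith [G.le_opNorm u, F.le_opNorm u, norm_nonneg (G u), norm_nonneg (F u)]

lemma closedLoop_error_step {n m p : ℕ}
    {A : EuclideanSpace ℝ (Fin n) →L[ℝ] EuclideanSpace ℝ (Fin n)}
    {B : EuclideanSpace ℝ (Fin m) →L[ℝ] EuclideanSpace ℝ (Fin n)}
    {C : EuclideanSpace ℝ (Fin n) →L[ℝ] EuclideanSpace ℝ (Fin p)}
    {K : EuclideanSpace ℝ (Fin n) →L[ℝ] EuclideanSpace ℝ (Fin m)}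
    {L : EuclideanSpace ℝ (Fin p) →L[ℝ] EuclideanSpace ℝ (Fin n)}
    {𝔸 : EucQuad n →L[ℝ] EucQuad n}
    (h𝔸 : ∀ a b c d : EuclideanSpace ℝ (Fin n),
      𝔸 (stack4 a b c d) =
        stack4 (A a + B (K b)) (L (C a) + (A + B.comp K - L.comp C) b)
               (A c + B (K d)) (L (C c) + (A + B.comp K - L.comp C) d))
    {x x' xs xs' xh xt xt' xhs xhs' w : EuclideanSpace ℝ (Fin n)}
    {y ys v : EuclideanSpace ℝ (Fin p)}
    (hx : x' = A x + B (K xh) + w) (hxs : xs' = A xs + B (K xhs) + w)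
    (hy : y = C x + v) (hys : ys = C xs + v)
    (ht : xt' = (A + B.comp K - L.comp C) xh + L y)
    (hhs : xhs' = (A + B.comp K - L.comp C) xhs + L ys) :
    stack4 (x' - xs') (xt' - xhs') 0 0 =
      𝔸 (stack4 (x - xs) (xt - xhs) 0 0) +
        stack4 ((B.comp K) (xh - xt)) ((A + B.comp K - L.comp C) (xh - xt)) 0 0 := by
  rw [h𝔸, stack4_add, hx, hxs, ht, hhs, hy, hys]
  simp only [map_sub, map_add, map_zero, ContinuousLinearMap.comp_apply, add_zero]
  congr 1 <;> abel

section Temperature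

variable {c C H κ θ ε β : ℝ}

lemma pos_or_eq_zero_of_temperature (hθ : θ < 1) (hε : 0 < ε) (hcC : c ^ 2 ≤ C)
    (hH : 1 ≤ H) (hκ : 1 ≤ κ)
    (hβ : C * H ^ 2 * κ ^ 2 / (2 * exp 1 * (1 - θ) ^ 2 * ε ^ 2) ≤ β) :
    0 < β ∨ c = 0 := by
  refine or_iff_not_imp_left.2 fun hβ0 => ?_
  have hden : 0 < 2 * exp 1 * (1 - θ) ^ 2 * ε ^ 2 := by
    have := sub_pos.2 hθ
    positivity
  have hnum := (div_le_iff₀ hden).1 hβ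
  have hHκ : 1 ≤ H ^ 2 * κ ^ 2 := one_le_mul_of_one_le_of_one_le (one_le_pow₀ hH) (one_le_pow₀ hκ)
  nlinarith

lemma error_bound_le_of_temperature (hθ : θ < 1) (hε : 0 < ε) (hcC : c ^ 2 ≤ C)
    (hβ : C * H ^ 2 * κ ^ 2 / (2 * exp 1 * (1 - θ) ^ 2 * ε ^ 2) ≤ β) :
    κ * (c * (H * (√(2 * exp 1 * β))⁻¹)) / (1 - θ) ≤ ε := by
  rcases le_or_gt β 0 with hβ0 | hβ0
  · rw [sqrt_eq_zero'.2 (by nlinarith [exp_pos 1])]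
    simpa using hε.le
  have h1 : 0 < 1 - θ := sub_pos.2 hθ
  have hnum := (div_le_iff₀ (by positivity)).1 hβ
  refine le_of_sq_le_sq ?_ hε.le
  have hcHκ := mul_le_mul_of_nonneg_right hcC (by positivity : 0 ≤ H ^ 2 * κ ^ 2)
  rw [div_pow, mul_pow, mul_pow, mul_pow, inv_pow, sq_sqrt (by positivity),
    div_le_iff₀ (by positivity),
    show κ ^ 2 * (c ^ 2 * (H ^ 2 * (2 * exp 1 * β)⁻¹)) = c ^ 2 * (H ^ 2 * κ ^ 2) / (2 * exp 1 * β)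
      by ring, div_le_iff₀ (by positivity)]
  linarith

end Temperature

open Finset in
theorem stmt14_general {n m p : ℕ}
    (A : EuclideanSpace ℝ (Fin n) →L[ℝ] EuclideanSpace ℝ (Fin n))
    (B : EuclideanSpace ℝ (Fin m) →L[ℝ] EuclideanSpace ℝ (Fin n))
    (C : EuclideanSpace ℝ (Fin n) →L[ℝ] EuclideanSpace ℝ (Fin p))
    (K : EuclideanSpace ℝ (Fin n) →L[ℝ] EuclideanSpace ℝ (Fin m))
    (L : EuclideanSpace ℝ (Fin p) →L[ℝ] EuclideanSpace ℝ (Fin n))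
    -- the 4n×4n closed-loop matrix 𝔸, acting blockwise
    (𝔸 : EucQuad n →L[ℝ] EucQuad n)
    (h𝔸 : ∀ a b c d : EuclideanSpace ℝ (Fin n),
      𝔸 (stack4 a b c d) =
        stack4 (A a + B (K b)) (L (C a) + (A + B.comp K - L.comp C) b)
               (A c + B (K d)) (L (C c) + (A + B.comp K - L.comp C) d))
    -- 𝔸 = 𝕄 Θ 𝕄⁻¹ with ‖Θ‖ < 1 (stability of the closed loop)
    (𝕄 : EucQuad n ≃L[ℝ] EucQuad n) (Θ : EucQuad n →L[ℝ] EucQuad n)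
    (hsim : 𝔸 = (𝕄 : EucQuad n →L[ℝ] EucQuad n).comp
        (Θ.comp (𝕄.symm : EucQuad n →L[ℝ] EucQuad n)))
    (hΘ : ‖Θ‖ < 1)
    (κ : ℝ)
    (hκ : κ = ‖(𝕄 : EucQuad n →L[ℝ] EucQuad n)‖ * ‖(𝕄.symm : EucQuad n →L[ℝ] EucQuad n)‖)
    (H : ℕ) (hH : 1 ≤ H) (β : ℝ)
    -- disturbances, shared by both closed loops
    (w : ℤ → EuclideanSpace ℝ (Fin n)) (v : ℤ → EuclideanSpace ℝ (Fin p))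
    -- Transformer-controlled system
    (x xhat xtilde : ℤ → EuclideanSpace ℝ (Fin n)) (y : ℤ → EuclideanSpace ℝ (Fin p))
    -- LQG-controlled system
    (xstar xhatstar : ℤ → EuclideanSpace ℝ (Fin n)) (ystar : ℤ → EuclideanSpace ℝ (Fin p))
    -- matching initializations
    (hx0 : x 0 = xstar 0) (hhat0 : xhat 0 = xhatstar 0) (htilde0 : xtilde 0 = xhatstar 0)
    -- dynamics of the Transformer-controlled system, with control u_t = K x̂_t
    (hx : ∀ t : ℤ, 0 ≤ t → x (t + 1) = A (x t) + B (K (xhat t)) + w t)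
    (hy : ∀ t : ℤ, 0 ≤ t → y t = C (x t) + v t)
    (htilde : ∀ i : ℤ, 1 ≤ i →
      xtilde i = (A + B.comp K - L.comp C) (xhat (i - 1)) + L (y (i - 1)))
    (hhat : ∀ t : ℤ, 1 ≤ t →
      xhat t = ∑ i ∈ Icc (t - (H : ℤ) + 1) t,
        (Real.exp (-β * ‖xtilde i - xtilde t‖ ^ 2) /
          ∑ j ∈ Icc (t - (H : ℤ) + 1) t, Real.exp (-β * ‖xtilde j - xtilde t‖ ^ 2)) •
          xtilde i)
    -- dynamics of the LQG-controlled system, with control u*_t = K x̂*_t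
    (hxstar : ∀ t : ℤ, 0 ≤ t → xstar (t + 1) = A (xstar t) + B (K (xhatstar t)) + w t)
    (hystar : ∀ t : ℤ, 0 ≤ t → ystar t = C (xstar t) + v t)
    (hhatstar : ∀ t : ℤ, 1 ≤ t →
      xhatstar t = (A + B.comp K - L.comp C) (xhatstar (t - 1)) + L (ystar (t - 1)))
    (ε : ℝ) (hε : 0 < ε)
    (hβ : β ≥ (2 * ‖B.comp K‖ ^ 2 + 2 * ‖A + B.comp K - L.comp C‖ ^ 2) *
        (H : ℝ) ^ 2 * κ ^ 2 / (2 * Real.exp 1 * (1 - ‖Θ‖) ^ 2 * ε ^ 2)) :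
    ∀ t : ℤ, 0 ≤ t → ‖x t - xstar t‖ ≤ ε := by
  intro t ht
  lift t to ℕ using ht
  set G := B.comp K
  set F := A + G - L.comp C
  set Δ : ℕ → EucQuad n := fun k => stack4 (x k - xstar k) (xtilde k - xhatstar k) 0 0
  set d : ℕ → EucQuad n := fun k => stack4 (G (xhat k - xtilde k)) (F (xhat k - xtilde k)) 0 0
  have hΔ0 : Δ 0 = 0 := by simp [Δ, hx0, htilde0]; rfl
  have hrec (k : ℕ) : Δ (k + 1) = 𝔸 (Δ k) + d k := by
    have hk : (0 : ℤ) ≤ k := k.cast_nonneg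
    simpa only [Δ, d, Nat.cast_succ] using
      closedLoop_error_step h𝔸 (hx k hk) (hxstar k hk) (hy k hk) (hystar k hk)
        (by simpa only [add_sub_cancel_right] using htilde (k + 1) (by omega))
        (by simpa only [add_sub_cancel_right] using hhatstar (k + 1) (by omega))
  have hη (hβ0 : 0 < β) (k : ℕ) : ‖xhat k - xtilde k‖ ≤ H * (√(2 * exp 1 * β))⁻¹ := by
    rcases Nat.eq_zero_or_pos k with rfl | hk
    · simp [hhat0, htilde0]; positivity
    · rw [hhat k (by omega)]; exact norm_softmax_window_sub_le hβ0 hH xtilde k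
  suffices hΔ : ‖Δ t‖ ≤ ε from (norm_le_norm_stack4 _ _ _ _).trans hΔ
  rcases subsingleton_or_nontrivial (EucQuad n) with _ | _
  · simp [Subsingleton.elim (Δ t) 0, hε.le]
  have hgain : (‖G‖ + ‖F‖) ^ 2 ≤ 2 * ‖G‖ ^ 2 + 2 * ‖F‖ ^ 2 :=
    add_sq_le.trans_eq (mul_add _ _ _)
  have hd (k : ℕ) : ‖d k‖ ≤ (‖G‖ + ‖F‖) * (H * (√(2 * exp 1 * β))⁻¹) := by
    refine (norm_stack4_apply_le G F _).trans ?_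
    -- for `β ≤ 0` there is no softmax bound, but then the temperature condition forces `G = F = 0`
    rcases pos_or_eq_zero_of_temperature hΘ hε hgain (by exact_mod_cast hH)
      (hκ ▸ 𝕄.one_le_norm_mul_norm_symm) hβ with hβ0 | hzero
    · exact mul_le_mul_of_nonneg_left (hη hβ0 k) (by positivity)
    · simp [hzero]
  calc ‖Δ t‖ ≤ κ * ((‖G‖ + ‖F‖) * (H * (√(2 * exp 1 * β))⁻¹)) / (1 - ‖Θ‖) :=
        hκ ▸ norm_le_of_similar_recursion 𝕄 hsim hΘ hΔ0 hrec hd t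
    _ ≤ ε := error_bound_le_of_temperature hΘ hε hgain hβ

open Finset in
/-- The Transformer-Filter-based controller approximates the LQG controller: with
temperature `β ≥ C H² κ²/(2e(1−‖Θ‖)² ε²)`, `C = 2‖BK‖² + 2‖A+BK−LC‖²`, the closed-loop
state trajectory stays `ε`-close to the LQG state trajectory, uniformly in time. -/
theorem stmt14 {n m p : ℕ}
    (A : EuclideanSpace ℝ (Fin n) →L[ℝ] EuclideanSpace ℝ (Fin n))
    (B : EuclideanSpace ℝ (Fin m) →L[ℝ] EuclideanSpace ℝ (Fin n))
    (C : EuclideanSpace ℝ (Fin n) →L[ℝ] EuclideanSpace ℝ (Fin p))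
    (K : EuclideanSpace ℝ (Fin n) →L[ℝ] EuclideanSpace ℝ (Fin m))
    (L : EuclideanSpace ℝ (Fin p) →L[ℝ] EuclideanSpace ℝ (Fin n))
    -- the 4n×4n closed-loop matrix 𝔸, acting blockwise
    (𝔸 : EucQuad n →L[ℝ] EucQuad n)
    (h𝔸 : ∀ a b c d : EuclideanSpace ℝ (Fin n),
      𝔸 (stack4 a b c d) =
        stack4 (A a + B (K b)) (L (C a) + (A + B.comp K - L.comp C) b)
               (A c + B (K d)) (L (C c) + (A + B.comp K - L.comp C) d))
    -- 𝔸 = 𝕄 Θ 𝕄⁻¹ with ‖Θ‖ < 1 (stability of the closed loop)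
    (𝕄 : EucQuad n ≃L[ℝ] EucQuad n) (Θ : EucQuad n →L[ℝ] EucQuad n)
    (hsim : 𝔸 = (𝕄 : EucQuad n →L[ℝ] EucQuad n).comp
        (Θ.comp (𝕄.symm : EucQuad n →L[ℝ] EucQuad n)))
    (hΘ : ‖Θ‖ < 1)
    (κ : ℝ)
    (hκ : κ = ‖(𝕄 : EucQuad n →L[ℝ] EucQuad n)‖ * ‖(𝕄.symm : EucQuad n →L[ℝ] EucQuad n)‖)
    (H : ℕ) (hH : 1 ≤ H) (β : ℝ)
    -- disturbances, shared by both closed loops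
    (w : ℤ → EuclideanSpace ℝ (Fin n)) (v : ℤ → EuclideanSpace ℝ (Fin p))
    -- Transformer-controlled system
    (x xhat xtilde : ℤ → EuclideanSpace ℝ (Fin n)) (y : ℤ → EuclideanSpace ℝ (Fin p))
    -- LQG-controlled system
    (xstar xhatstar : ℤ → EuclideanSpace ℝ (Fin n)) (ystar : ℤ → EuclideanSpace ℝ (Fin p))
    -- convention: quantities vanish for negative times
    (hyneg : ∀ i : ℤ, i < 0 → y i = 0)
    (hhatneg : ∀ i : ℤ, i < 0 → xhat i = 0)
    (htildeneg : ∀ i : ℤ, i < 0 → xtilde i = 0)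
    -- matching initializations
    (hx0 : x 0 = xstar 0) (hhat0 : xhat 0 = xhatstar 0) (htilde0 : xtilde 0 = xhatstar 0)
    -- dynamics of the Transformer-controlled system, with control u_t = K x̂_t
    (hx : ∀ t : ℤ, 0 ≤ t → x (t + 1) = A (x t) + B (K (xhat t)) + w t)
    (hy : ∀ t : ℤ, 0 ≤ t → y t = C (x t) + v t)
    (htilde : ∀ i : ℤ, 1 ≤ i →
      xtilde i = (A + B.comp K - L.comp C) (xhat (i - 1)) + L (y (i - 1)))
    (hhat : ∀ t : ℤ, 1 ≤ t →
      xhat t = ∑ i ∈ Icc (t - (H : ℤ) + 1) t,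
        (Real.exp (-β * ‖xtilde i - xtilde t‖ ^ 2) /
          ∑ j ∈ Icc (t - (H : ℤ) + 1) t, Real.exp (-β * ‖xtilde j - xtilde t‖ ^ 2)) •
          xtilde i)
    -- dynamics of the LQG-controlled system, with control u*_t = K x̂*_t
    (hxstar : ∀ t : ℤ, 0 ≤ t → xstar (t + 1) = A (xstar t) + B (K (xhatstar t)) + w t)
    (hystar : ∀ t : ℤ, 0 ≤ t → ystar t = C (xstar t) + v t)
    (hhatstar : ∀ t : ℤ, 1 ≤ t →
      xhatstar t = (A + B.comp K - L.comp C) (xhatstar (t - 1)) + L (ystar (t - 1)))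
    (ε : ℝ) (hε : 0 < ε)
    (hβ : β ≥ (2 * ‖B.comp K‖ ^ 2 + 2 * ‖A + B.comp K - L.comp C‖ ^ 2) *
        (H : ℝ) ^ 2 * κ ^ 2 / (2 * Real.exp 1 * (1 - ‖Θ‖) ^ 2 * ε ^ 2)) :
    ∀ t : ℤ, 0 ≤ t → ‖x t - xstar t‖ ≤ ε :=
  stmt14_general A B C K L 𝔸 h𝔸 𝕄 Θ hsim hΘ κ hκ H hH β w v x xhat xtilde y xstar xhatstar ystar hx0
    hhat0 htilde0 hx hy htilde hhat hxstar hystar hhatstar ε hε hβ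

end
end
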